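/- arXiv:1812.10041 — 2 statements merged into one kernel-verified Lean document; each statement's English description precedes it below -/
import Mathlib

section
/- Let X_1, …, X_d be n-by-n real matrices with ‖Σ_i X_i ⊗ X_i‖ < 1 for a consistent matrix norm, and let P = [(I − Σ_i X_i ⊗ X_i)^{-1}]^ψ. Then P = Σ_{k=0}^∞ Σ_{i_1,…,i_k ∈ {1,…,d}} (vec X_{i_1}⋯X_{i_k})(vec X_{i_1}⋯X_{i_k})ᵀ, where the k = 0 term is (vec I)(vec I)ᵀ. -/
open Matrix Kronecker

/-- `vec` stacks the columns of a matrix into a single column vector. -/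
def vec {n : ℕ} (A : Matrix (Fin n) (Fin n) ℝ) : Fin n × Fin n → ℝ :=
  fun p => A p.1 p.2

/-- The ψ-involution on n²-by-n² matrices. -/
def psi {n : ℕ} (A : Matrix (Fin n × Fin n) (Fin n × Fin n) ℝ) :
    Matrix (Fin n × Fin n) (Fin n × Fin n) ℝ :=
  fun p q => A (p.1, q.1) (p.2, q.2)

/-!
Expanding `S = ∑ i, X i ⊗ₖ X i` gives `S ^ k = ∑_w X_w ⊗ₖ X_w` over words `w` of length `k`,
and `ψ (A ⊗ₖ B) = (vec A) (vec B)ᵀ`, so the claim is `ψ` applied to the Neumann series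
`(1 - S)⁻¹ = ∑ S ^ k`. That series converges because `ν (S ^ k) ≤ ν 1 * ν S ^ k` and, all norms
on a finite-dimensional space being equivalent, `ν` dominates every entry of a matrix.
-/

section HomogeneousNorm

variable {E : Type*} [AddCommGroup E] [Module ℝ E] {ν : E → ℝ}

def AddGroupSeminorm.ofHomogeneous (htri : ∀ x y, ν (x + y) ≤ ν x + ν y)
    (hsmul : ∀ (c : ℝ) x, ν (c • x) = |c| * ν x) : AddGroupSeminorm E where
  toFun := ν
  map_zero' := by simpa using hsmul 0 0
  add_le' := htri
  neg' x := by simpa using hsmul (-1) x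

lemma nonneg_of_homogeneous (htri : ∀ x y, ν (x + y) ≤ ν x + ν y)
    (hsmul : ∀ (c : ℝ) x, ν (c • x) = |c| * ν x) (x : E) : 0 ≤ ν x :=
  apply_nonneg (AddGroupSeminorm.ofHomogeneous htri hsmul) x

lemma exists_abs_le_mul_of_homogeneous [FiniteDimensional ℝ E]
    (hdef : ∀ x, ν x = 0 → x = 0) (htri : ∀ x y, ν (x + y) ≤ ν x + ν y)
    (hsmul : ∀ (c : ℝ) x, ν (c • x) = |c| * ν x) (f : E →ₗ[ℝ] ℝ) :
    ∃ C, ∀ x, |f x| ≤ C * ν x := by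
  let _ : NormedAddCommGroup E := AddGroupNorm.toNormedAddCommGroup
    { AddGroupSeminorm.ofHomogeneous htri hsmul with eq_zero_of_map_eq_zero' := hdef }
  let _ : NormedSpace ℝ E := ⟨fun c x => (hsmul c x).le⟩
  exact ⟨_, (LinearMap.toContinuousLinearMap f).le_opNorm⟩

end HomogeneousNorm

lemma Matrix.summable_of_summable_homogeneous {ι m m' : Type*} [Fintype m] [Fintype m']
    {ν : Matrix m m' ℝ → ℝ}
    (hdef : ∀ A, ν A = 0 → A = 0) (htri : ∀ A B, ν (A + B) ≤ ν A + ν B)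
    (hsmul : ∀ (c : ℝ) A, ν (c • A) = |c| * ν A)
    {F : ι → Matrix m m' ℝ} (hF : Summable fun k => ν (F k)) : Summable F :=
  Pi.summable.2 fun p => Pi.summable.2 fun q => by
    obtain ⟨C, hC⟩ := exists_abs_le_mul_of_homogeneous hdef htri hsmul (entryLinearMap ℝ ℝ p q)
    exact (hF.mul_left C).of_norm_bounded fun k => hC (F k)

lemma apply_pow_le_of_submultiplicative {M : Type*} [Monoid M] {ν : M → ℝ}
    (hmul : ∀ x y, ν (x * y) ≤ ν x * ν y) {x : M} (hx : 0 ≤ ν x) (k : ℕ) :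
    ν (x ^ k) ≤ ν 1 * ν x ^ k := by
  induction k with
  | zero => simp
  | succ k ih =>
    calc ν (x ^ (k + 1)) ≤ ν (x ^ k) * ν x := pow_succ x k ▸ hmul _ _
      _ ≤ ν 1 * ν x ^ k * ν x := by gcongr
      _ = ν 1 * ν x ^ (k + 1) := by ring

lemma Matrix.hasSum_geometric_of_summable {m α : Type*} [Fintype m] [DecidableEq m] [CommRing α]
    [TopologicalSpace α] [IsTopologicalRing α] [T2Space α] {A : Matrix m m α}
    (h : Summable (A ^ ·)) : HasSum (A ^ ·) (1 - A)⁻¹ := by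
  rw [Matrix.inv_eq_right_inv h.one_sub_mul_tsum_pow]
  exact h.hasSum

lemma sum_pow_eq_sum_prod_ofFn {R ι : Type*} [Semiring R] [Fintype ι] (f : ι → R) (k : ℕ) :
    (∑ i, f i) ^ k = ∑ w : Fin k → ι, (List.ofFn fun j => f (w j)).prod := by
  induction k with
  | zero => simp
  | succ k ih =>
    rw [pow_succ', ih, Finset.sum_mul_sum, ← (Fin.consEquiv fun _ => ι).sum_comp,
      Fintype.sum_prod_type]
    simp [List.ofFn_succ]

lemma List.prod_ofFn_kronecker {m n R : Type*} [Fintype m] [Fintype n] [DecidableEq m]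
    [DecidableEq n] [CommSemiring R] {k : ℕ} (A : Fin k → Matrix m m R)
    (B : Fin k → Matrix n n R) :
    (List.ofFn fun j => A j ⊗ₖ B j).prod = (List.ofFn A).prod ⊗ₖ (List.ofFn B).prod := by
  induction k with
  | zero => simp
  | succ k ih => simp [List.ofFn_succ, ih, mul_kronecker_mul]

lemma hasSum_psi {ι : Type*} {n : ℕ} {F : ι → Matrix (Fin n × Fin n) (Fin n × Fin n) ℝ}
    {A : Matrix (Fin n × Fin n) (Fin n × Fin n) ℝ} (h : HasSum F A) :
    HasSum (fun k => psi (F k)) (psi A) :=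
  Pi.hasSum.2 fun p => Pi.hasSum.2 fun q => Pi.hasSum.1 (Pi.hasSum.1 h (p.1, q.1)) (p.2, q.2)

lemma psi_sum {ι : Type*} {n : ℕ} (s : Finset ι)
    (F : ι → Matrix (Fin n × Fin n) (Fin n × Fin n) ℝ) :
    psi (∑ i ∈ s, F i) = ∑ i ∈ s, psi (F i) := by
  ext p q
  simp [psi, Matrix.sum_apply]

lemma psi_kronecker {n : ℕ} (A B : Matrix (Fin n) (Fin n) ℝ) :
    psi (A ⊗ₖ B) = vecMulVec (_root_.vec A) (_root_.vec B) := rfl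

theorem P_eq_sum_words_general {n d : ℕ} (X : Fin d → Matrix (Fin n) (Fin n) ℝ)
    (ν : Matrix (Fin n × Fin n) (Fin n × Fin n) ℝ → ℝ)
    (hdef : ∀ A, ν A = 0 → A = 0)
    (htri : ∀ A B, ν (A + B) ≤ ν A + ν B)
    (hsmul : ∀ (c : ℝ) A, ν (c • A) = |c| * ν A)
    (hsubmul : ∀ A B, ν (A * B) ≤ ν A * ν B)
    (hlt : ν (∑ i, X i ⊗ₖ X i) < 1) :
    HasSum
      (fun k : ℕ => ∑ w : Fin k → Fin d,
        vecMulVec (_root_.vec (List.ofFn fun j => X (w j)).prod)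
          (_root_.vec (List.ofFn fun j => X (w j)).prod))
      (psi (1 - ∑ i, X i ⊗ₖ X i)⁻¹) := by
  set S := ∑ i, X i ⊗ₖ X i
  have hν := nonneg_of_homogeneous htri hsmul
  have hsummable : Summable (S ^ ·) :=
    Matrix.summable_of_summable_homogeneous hdef htri hsmul <|
      .of_nonneg_of_le (fun k => hν _) (apply_pow_le_of_submultiplicative hsubmul (hν S))
        ((summable_geometric_of_lt_one (hν S) hlt).mul_left (ν 1))
  have hterm (k : ℕ) : psi (S ^ k) = ∑ w : Fin k → Fin d,
      vecMulVec (_root_.vec (List.ofFn fun j => X (w j)).prod)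
        (_root_.vec (List.ofFn fun j => X (w j)).prod) := by
    simp only [S, sum_pow_eq_sum_prod_ofFn, psi_sum, ← psi_kronecker,
      List.prod_ofFn_kronecker]
  simpa only [hterm] using hasSum_psi (Matrix.hasSum_geometric_of_summable hsummable)

theorem P_eq_sum_words {n d : ℕ} (X : Fin d → Matrix (Fin n) (Fin n) ℝ)
    (ν : Matrix (Fin n × Fin n) (Fin n × Fin n) ℝ → ℝ)
    (hnonneg : ∀ A, 0 ≤ ν A)
    (hdef : ∀ A, ν A = 0 → A = 0)
    (htri : ∀ A B, ν (A + B) ≤ ν A + ν B)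
    (hsmul : ∀ (c : ℝ) A, ν (c • A) = |c| * ν A)
    (hsubmul : ∀ A B, ν (A * B) ≤ ν A * ν B)
    (hlt : ν (∑ i, X i ⊗ₖ X i) < 1) :
    HasSum
      (fun k : ℕ => ∑ w : Fin k → Fin d,
        vecMulVec (_root_.vec (List.ofFn fun j => X (w j)).prod)
          (_root_.vec (List.ofFn fun j => X (w j)).prod))
      (psi (1 - ∑ i, X i ⊗ₖ X i)⁻¹) :=
  P_eq_sum_words_general X ν hdef htri hsmul hsubmul hlt
end

section
/- Let X_1, …, X_d be n-by-n real matrices with ‖Σ_i X_i ⊗ X_i‖ < 1 for a consistent matrix norm, and let P = [(I − Σ_i X_i ⊗ X_i)^{-1}]^ψ. Then P is symmetric and positive semidefinite. -/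
open Matrix Kronecker

/-!
Write `S = ∑ᵢ Xᵢ ⊗ Xᵢ`. Since `ν` is a submultiplicative norm and all norms on a
finite-dimensional space are equivalent, `ν S < 1` forces `S ^ k → 0` entrywise; hence `1 - S` is
invertible and `(1 - S)⁻¹ = ∑ₖ S ^ k`. Each `S ^ k` is a sum of Kronecker squares `M ⊗ M`, and
`ψ (M ⊗ M) = (vec M)(vec M)ᵀ` is positive semidefinite, so every partial sum of `ψ (∑ₖ S ^ k)` is
positive semidefinite, and so is the limit because the positive semidefinite cone is closed.
-/

open Filter Topology Finset

def RingNorm.ofAbsHomogeneous {R : Type*} [Ring R] [Module ℝ R] (ν : R → ℝ)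
    (hdef : ∀ A, ν A = 0 → A = 0)
    (htri : ∀ A B, ν (A + B) ≤ ν A + ν B)
    (hsmul : ∀ (c : ℝ) A, ν (c • A) = |c| * ν A)
    (hsubmul : ∀ A B, ν (A * B) ≤ ν A * ν B) : RingNorm R where
  toFun := ν
  map_zero' := by simpa using hsmul 0 0
  add_le' := htri
  neg' A := by simpa using hsmul (-1) A
  mul_le' := hsubmul
  eq_zero_of_map_eq_zero' := hdef

/-- Real square matrices without the entrywise topology, so that another norm can be put on them. -/
def Matrix.Renormed (m : Type*) : Type _ := Matrix m m ℝ

noncomputable instance (m : Type*) [Fintype m] [DecidableEq m] : Ring (Matrix.Renormed m) :=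
  inferInstanceAs (Ring (Matrix m m ℝ))

noncomputable instance (m : Type*) [Fintype m] [DecidableEq m] : Module ℝ (Matrix.Renormed m) :=
  inferInstanceAs (Module ℝ (Matrix m m ℝ))

instance (m : Type*) [Fintype m] [DecidableEq m] : Module.Finite ℝ (Matrix.Renormed m) :=
  inferInstanceAs (Module.Finite ℝ (Matrix m m ℝ))

theorem Matrix.tendsto_pow_zero_of_ringNorm_lt_one {m : Type*} [Fintype m] [DecidableEq m]
    (ν : RingNorm (Matrix m m ℝ)) (hsmul : ∀ (c : ℝ) A, ν (c • A) = |c| * ν A)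
    {S : Matrix m m ℝ} (hS : ν S < 1) : Tendsto (S ^ ·) atTop (𝓝 0) := by
  let _ : NormedRing (Matrix.Renormed m) := RingNorm.toNormedRing ν
  let _ : NormedSpace ℝ (Matrix.Renormed m) := ⟨fun c A => (hsmul c A).le⟩
  let toMatrix : Matrix.Renormed m →ₗ[ℝ] Matrix m m ℝ :=
    { toFun := fun A => A, map_add' := fun _ _ => rfl, map_smul' := fun _ _ => rfl }
  exact (toMatrix.continuous_of_finiteDimensional.tendsto' 0 0 rfl).comp
    (tendsto_pow_atTop_nhds_zero_of_norm_lt_one (R := Matrix.Renormed m) hS)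

section GeometricSeries

variable {m K : Type*} [Fintype m] [DecidableEq m] [Field K] [TopologicalSpace K]
  [IsTopologicalRing K] [T1Space K] {S : Matrix m m K}

theorem Matrix.isUnit_det_one_sub_of_tendsto_pow (hS : Tendsto (S ^ ·) atTop (𝓝 0)) :
    IsUnit (1 - S).det := by
  have hdet : Tendsto (fun N => (1 - S ^ N).det) atTop (𝓝 1) := by
    simpa [Function.comp_def] using
      (continuous_id.matrix_det.tendsto _).comp ((tendsto_const_nhds (x := 1)).sub hS)
  obtain ⟨N, hN⟩ := (hdet.eventually_ne one_ne_zero).exists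
  rw [← mul_neg_geom_sum, det_mul] at hN
  exact isUnit_iff_ne_zero.mpr (left_ne_zero_of_mul hN)

theorem Matrix.tendsto_geom_sum_of_tendsto_pow (hS : Tendsto (S ^ ·) atTop (𝓝 0)) :
    Tendsto (fun N => ∑ k ∈ range N, S ^ k) atTop (𝓝 (1 - S)⁻¹) := by
  have hsum : ∀ N, ∑ k ∈ range N, S ^ k = (1 - S)⁻¹ * (1 - S ^ N) := fun N => by
    rw [← mul_neg_geom_sum]
    exact (nonsing_inv_mul_cancel_left _ _ (isUnit_det_one_sub_of_tendsto_pow hS)).symm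
  simpa [hsum] using ((tendsto_const_nhds (x := 1)).sub hS).const_mul (1 - S)⁻¹

end GeometricSeries

theorem Matrix.isClosed_setOf_posSemidef {m : Type*} [Fintype m] :
    IsClosed {A : Matrix m m ℝ | A.PosSemidef} := by
  simp only [posSemidef_iff_dotProduct_mulVec, Set.ofPred_and, Set.ofPred_forall]
  refine (isClosed_eq continuous_id.matrix_conjTranspose continuous_id).inter
    (isClosed_iInter fun x => isClosed_le continuous_const ?_)
  exact continuous_const.dotProduct (continuous_id.matrix_mulVec continuous_const)

def Matrix.kroneckerSquares (m R : Type*) [Fintype m] [DecidableEq m] [CommSemiring R] :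
    Submonoid (Matrix (m × m) (m × m) R) where
  carrier := Set.range fun M : Matrix m m R => M ⊗ₖ M
  one_mem' := ⟨1, one_kronecker_one⟩
  mul_mem' := by
    rintro _ _ ⟨A, rfl⟩ ⟨B, rfl⟩
    exact ⟨A * B, mul_kronecker_mul A B A B⟩

section Psi

variable {n : ℕ}

theorem psi_zero : psi (0 : Matrix (Fin n × Fin n) (Fin n × Fin n) ℝ) = 0 := rfl

theorem psi_add (A B : Matrix (Fin n × Fin n) (Fin n × Fin n) ℝ) :
    psi (A + B) = psi A + psi B := rfl

theorem continuous_psi : Continuous (psi (n := n)) :=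
  continuous_pi fun _ => continuous_pi fun _ => continuous_id.matrix_elem _ _

theorem psi_kronecker_self (M : Matrix (Fin n) (Fin n) ℝ) :
    psi (M ⊗ₖ M) = vecMulVec (_root_.vec M) (_root_.vec M) := rfl

theorem posSemidef_psi_of_mem_subsemiringClosure {A : Matrix (Fin n × Fin n) (Fin n × Fin n) ℝ}
    (hA : A ∈ (kroneckerSquares (Fin n) ℝ).subsemiringClosure) : (psi A).PosSemidef := by
  induction hA using AddSubmonoid.closure_induction with
  | mem _ hM =>
    obtain ⟨M, rfl⟩ := hM
    simpa [psi_kronecker_self] using posSemidef_vecMulVec_self_star (_root_.vec M)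
  | zero => exact psi_zero ▸ PosSemidef.zero
  | add _ _ _ _ hA hB => exact psi_add _ _ ▸ hA.add hB

end Psi

theorem P_symm_posSemidef_general {n d : ℕ} (X : Fin d → Matrix (Fin n) (Fin n) ℝ)
    (ν : Matrix (Fin n × Fin n) (Fin n × Fin n) ℝ → ℝ)
    (hdef : ∀ A, ν A = 0 → A = 0)
    (htri : ∀ A B, ν (A + B) ≤ ν A + ν B)
    (hsmul : ∀ (c : ℝ) A, ν (c • A) = |c| * ν A)
    (hsubmul : ∀ A B, ν (A * B) ≤ ν A * ν B)
    (hlt : ν (∑ i, X i ⊗ₖ X i) < 1) :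
    (psi (1 - ∑ i, X i ⊗ₖ X i)⁻¹).IsSymm ∧ (psi (1 - ∑ i, X i ⊗ₖ X i)⁻¹).PosSemidef := by
  set S := ∑ i, X i ⊗ₖ X i
  have hpow : Tendsto (S ^ ·) atTop (𝓝 0) :=
    tendsto_pow_zero_of_ringNorm_lt_one (.ofAbsHomogeneous ν hdef htri hsmul hsubmul) hsmul hlt
  have hS : S ∈ (kroneckerSquares (Fin n) ℝ).subsemiringClosure :=
    Subsemiring.sum_mem _ fun i _ => AddSubmonoid.subset_closure ⟨X i, rfl⟩
  have hP : (psi (1 - S)⁻¹).PosSemidef :=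
    isClosed_setOf_posSemidef.mem_of_tendsto
      ((continuous_psi.tendsto _).comp (tendsto_geom_sum_of_tendsto_pow hpow))
      (Eventually.of_forall fun _ => posSemidef_psi_of_mem_subsemiringClosure
        (Subsemiring.sum_mem _ fun k _ => Subsemiring.pow_mem _ hS k))
  exact ⟨isHermitian_iff_isSymm.mp hP.isHermitian, hP⟩

theorem P_symm_posSemidef {n d : ℕ} (X : Fin d → Matrix (Fin n) (Fin n) ℝ)
    (ν : Matrix (Fin n × Fin n) (Fin n × Fin n) ℝ → ℝ)
    (hnonneg : ∀ A, 0 ≤ ν A)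
    (hdef : ∀ A, ν A = 0 → A = 0)
    (htri : ∀ A B, ν (A + B) ≤ ν A + ν B)
    (hsmul : ∀ (c : ℝ) A, ν (c • A) = |c| * ν A)
    (hsubmul : ∀ A B, ν (A * B) ≤ ν A * ν B)
    (hlt : ν (∑ i, X i ⊗ₖ X i) < 1) :
    (psi (1 - ∑ i, X i ⊗ₖ X i)⁻¹).IsSymm ∧ (psi (1 - ∑ i, X i ⊗ₖ X i)⁻¹).PosSemidef :=
  P_symm_posSemidef_general X ν hdef htri hsmul hsubmul hlt
end
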